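/- There exists no finite set X of syllogistic rules in the fragment R such that the direct derivation relation ⊢_X is both sound and complete for R. -/
import Mathlib


/-!
Syllogistic logics (Pratt-Hartmann & Moss, "Logics for the Relational Syllogistic").

Unary atoms and binary atoms are encoded by `ℕ` (two disjoint copies).
-/

namespace Syllogistic

/-- Unary literals: a unary atom `p` or its negation `p̄`. -/
inductive Lit : Type
  | pos : ℕ → Lit
  | neg : ℕ → Lit
deriving DecidableEq

/-- Binary literals: a binary atom `r` or its negation `r̄`. -/
inductive BLit : Type
  | pos : ℕ → BLit
  | neg : ℕ → BLit
deriving DecidableEq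

/-- Bar (negation) on unary literals. -/
def Lit.bar : Lit → Lit
  | .pos p => .neg p
  | .neg p => .pos p

/-- Bar (negation) on binary literals. -/
def BLit.bar : BLit → BLit
  | .pos r => .neg r
  | .neg r => .pos r

/-- A unary literal is positive if it is an atom. -/
def Lit.isPos : Lit → Prop
  | .pos _ => True
  | .neg _ => False

/-- A binary literal is positive if it is an atom. -/
def BLit.isPos : BLit → Prop
  | .pos _ => True
  | .neg _ => False

/-- e-terms: a unary literal `l`, or `∃(l,t)`, or `∀(l,t)`. -/
inductive ETerm : Type
  | lit : Lit → ETerm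
  | ex : Lit → BLit → ETerm
  | al : Lit → BLit → ETerm
deriving DecidableEq

/-- The e-term consisting of a single positive unary atom. -/
def atomE (p : ℕ) : ETerm := .lit (.pos p)

/-- Bar on e-terms: `∀(l,t)‾ = ∃(l,t̄)` and `∃(l,t)‾ = ∀(l,t̄)`. -/
def ETerm.bar : ETerm → ETerm
  | .lit l => .lit l.bar
  | .ex l t => .al l t.bar
  | .al l t => .ex l t.bar

/-- c-terms: a unary literal, or `∃(p,t)`/`∀(p,t)` with `p` a unary atom. -/
def ETerm.isC : ETerm → Prop
  | .lit _ => True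
  | .ex l _ => l.isPos
  | .al l _ => l.isPos

/-- Positive c-terms: the literals occurring in them are positive. -/
def ETerm.isPosC : ETerm → Prop
  | .lit l => l.isPos
  | .ex l t => l.isPos ∧ t.isPos
  | .al l t => l.isPos ∧ t.isPos

/-- R*†-formulas: `∃(e,f)` or `∀(e,f)` for e-terms `e`, `f`. -/
inductive Formula : Type
  | ex : ETerm → ETerm → Formula
  | al : ETerm → ETerm → Formula
deriving DecidableEq

/-- Negation of a formula: `∀(e,f)‾ = ∃(e,f̄)`, `∃(e,f)‾ = ∀(e,f̄)`. -/
def Formula.bar : Formula → Formula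
  | .ex e f => .al e f.bar
  | .al e f => .ex e f.bar

/-- The silent identification: `∃(e,f)` with `∃(f,e)`, and `∀(e,f)` with `∀(f̄,ē)`. -/
def Formula.swap : Formula → Formula
  | .ex e f => .ex f e
  | .al e f => .al f.bar e.bar

/-- Two formulas are identified if they are equal or are swaps of each other. -/
def FormEquiv (φ ψ : Formula) : Prop := ψ = φ ∨ ψ = φ.swap

/-- An absurdity is a formula of the form `∃(e,ē)`. -/
def IsAbsurd (φ : Formula) : Prop := ∃ e : ETerm, φ = .ex e e.bar

/-- A substitution maps unary atoms to unary atoms and binary atoms to binary atoms. -/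
structure Subst where
  u : ℕ → ℕ
  b : ℕ → ℕ

def Lit.subst (g : Subst) : Lit → Lit
  | .pos p => .pos (g.u p)
  | .neg p => .neg (g.u p)

def BLit.subst (g : Subst) : BLit → BLit
  | .pos r => .pos (g.b r)
  | .neg r => .neg (g.b r)

def ETerm.subst (g : Subst) : ETerm → ETerm
  | .lit l => .lit (l.subst g)
  | .ex l t => .ex (l.subst g) (t.subst g)
  | .al l t => .al (l.subst g) (t.subst g)

/-- Atom-wise application of a substitution to a formula. -/
def Formula.subst (g : Subst) : Formula → Formula
  | .ex e f => .ex (e.subst g) (f.subst g)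
  | .al e f => .al (e.subst g) (f.subst g)

/-- A structure over a domain `A`: an interpretation of every unary atom as a
subset of `A` and of every binary atom as a binary relation on `A`.
(Non-emptiness of the domain is imposed where structures are quantified over.) -/
structure Interp (A : Type) where
  up : ℕ → Set A
  br : ℕ → Set (A × A)

def Interp.litI {A : Type} (M : Interp A) : Lit → Set A
  | .pos p => M.up p
  | .neg p => (M.up p)ᶜ

def Interp.blitI {A : Type} (M : Interp A) : BLit → Set (A × A)
  | .pos r => M.br r
  | .neg r => (M.br r)ᶜ

/-- Interpretation of e-terms. -/
def Interp.etermI {A : Type} (M : Interp A) : ETerm → Set A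
  | .lit l => M.litI l
  | .ex l t => {a | ∃ b ∈ M.litI l, (a, b) ∈ M.blitI t}
  | .al l t => {a | ∀ b ∈ M.litI l, (a, b) ∈ M.blitI t}

/-- Truth of a formula in a structure. -/
def Interp.Sat {A : Type} (M : Interp A) : Formula → Prop
  | .al e f => M.etermI e ⊆ M.etermI f
  | .ex e f => (M.etermI e ∩ M.etermI f).Nonempty

/-- Truth of a set of formulas in a structure. -/
def Interp.SatSet {A : Type} (M : Interp A) (Θ : Set Formula) : Prop :=
  ∀ θ ∈ Θ, M.Sat θ

/-- `Θ ⊨ θ`: every structure (with non-empty domain) satisfying `Θ` satisfies `θ`. -/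
def Entails (Θ : Set Formula) (θ : Formula) : Prop :=
  ∀ (A : Type), Nonempty A → ∀ M : Interp A, M.SatSet Θ → M.Sat θ

/-- `Θ` is satisfied in some structure with non-empty domain. -/
def Satisfiable (Θ : Set Formula) : Prop :=
  ∃ (A : Type), Nonempty A ∧ ∃ M : Interp A, M.SatSet Θ

/-- A syllogistic rule: a finite set of antecedents together with a consequent. -/
structure SylRule where
  ants : Finset Formula
  con : Formula

/-- A rule is sound if its antecedents entail its consequent. -/
def SylRule.Sound (R : SylRule) : Prop := Entails (↑R.ants) R.con

/-- A rule is a rule *in* the fragment `F` if all its formulas lie in `F`. -/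
def RuleIn (F : Set Formula) (R : SylRule) : Prop :=
  (∀ ψ ∈ R.ants, ψ ∈ F) ∧ R.con ∈ F

/-- The instance of a rule under a substitution. -/
def SylRule.inst (g : Subst) (R : SylRule) : SylRule :=
  ⟨R.ants.image (Formula.subst g), R.con.subst g⟩

/-- Two rules are the same modulo the identification of formulas. -/
def RuleEquiv (R R' : SylRule) : Prop :=
  (∀ ψ ∈ R.ants, ∃ ψ' ∈ R'.ants, FormEquiv ψ ψ') ∧
  (∀ ψ' ∈ R'.ants, ∃ ψ ∈ R.ants, FormEquiv ψ ψ') ∧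
  FormEquiv R.con R'.con

/-- The direct derivation relation `⊢_X` determined by a set `X` of syllogistic
rules: premises may be used, and instances of rules applied; formulas are
treated up to the silent identification. -/
inductive Derives (X : Set SylRule) : Set Formula → Formula → Prop
  | mem {Θ : Set Formula} {θ : Formula} : θ ∈ Θ → Derives X Θ θ
  | rule {Θ : Set Formula} (R : SylRule) (g : Subst) :
      R ∈ X → (∀ ψ ∈ R.ants, Derives X Θ (ψ.subst g)) →
      Derives X Θ (R.con.subst g)
  | ident {Θ : Set Formula} {φ ψ : Formula} :
      Derives X Θ φ → FormEquiv φ ψ → Derives X Θ ψ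

/-- The indirect derivation relation `⊩_X`: as `⊢_X`, together with
*reductio ad absurdum*. -/
inductive IDerives (X : Set SylRule) : Set Formula → Formula → Prop
  | mem {Θ : Set Formula} {θ : Formula} : θ ∈ Θ → IDerives X Θ θ
  | rule {Θ : Set Formula} (R : SylRule) (g : Subst) :
      R ∈ X → (∀ ψ ∈ R.ants, IDerives X Θ (ψ.subst g)) →
      IDerives X Θ (R.con.subst g)
  | ident {Θ : Set Formula} {φ ψ : Formula} :
      IDerives X Θ φ → FormEquiv φ ψ → IDerives X Θ ψ
  | raa {Θ : Set Formula} {θ b : Formula} :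
      IsAbsurd b → IDerives X (Θ ∪ {θ.bar}) b → IDerives X Θ θ

/-- Soundness of a derivation relation for the fragment `F`. -/
def SoundFor (F : Set Formula) (D : Set Formula → Formula → Prop) : Prop :=
  ∀ (Θ : Set Formula) (θ : Formula), Θ ⊆ F → θ ∈ F → D Θ θ → Entails Θ θ

/-- Completeness of a derivation relation for the fragment `F`. -/
def CompleteFor (F : Set Formula) (D : Set Formula → Formula → Prop) : Prop :=
  ∀ (Θ : Set Formula) (θ : Formula), Θ ⊆ F → θ ∈ F → Entails Θ θ → D Θ θ

/-- Refutation-completeness for the fragment `F`: every unsatisfiable set of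
`F`-formulas derives some absurdity. -/
def RefutationCompleteFor (F : Set Formula) (D : Set Formula → Formula → Prop) : Prop :=
  ∀ Θ : Set Formula, Θ ⊆ F → ¬ Satisfiable Θ → ∃ b, IsAbsurd b ∧ D Θ b

/-- Consistency of a set of formulas with respect to `⊩_X`. -/
def Consistent (X : Set SylRule) (Θ : Set Formula) : Prop :=
  ¬ ∃ b, IsAbsurd b ∧ IDerives X Θ b

/-! ### The six fragments -/

/-- The fragment `S`: `∃(p,l)`, `∃(l,p)`, `∀(p,l)`, `∀(l,p̄)`. -/
def FragS : Set Formula :=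
  {φ | (∃ (p : ℕ) (l : Lit), φ = .ex (atomE p) (.lit l)) ∨
       (∃ (p : ℕ) (l : Lit), φ = .ex (.lit l) (atomE p)) ∨
       (∃ (p : ℕ) (l : Lit), φ = .al (atomE p) (.lit l)) ∨
       (∃ (p : ℕ) (l : Lit), φ = .al (.lit l) (.lit (.neg p)))}

/-- The fragment `S†`: `∃(l,m)`, `∀(l,m)` for unary literals `l`, `m`. -/
def FragSdag : Set Formula :=
  {φ | ∃ l m : Lit, φ = .ex (.lit l) (.lit m) ∨ φ = .al (.lit l) (.lit m)}

/-- The fragment `R`: `∃(p,c)`, `∃(c,p)`, `∀(p,c)`, `∀(c,p̄)` for a c-term `c`. -/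
def FragR : Set Formula :=
  {φ | ∃ (p : ℕ) (c : ETerm), c.isC ∧
       (φ = .ex (atomE p) c ∨ φ = .ex c (atomE p) ∨
        φ = .al (atomE p) c ∨ φ = .al c (.lit (.neg p)))}

/-- The fragment `R†`: `∃(l,e)`, `∃(e,l)`, `∀(l,e)`, `∀(e,l)` for an e-term `e`. -/
def FragRdag : Set Formula :=
  {φ | ∃ (l : Lit) (e : ETerm),
       φ = .ex (.lit l) e ∨ φ = .ex e (.lit l) ∨
       φ = .al (.lit l) e ∨ φ = .al e (.lit l)}

/-- The fragment `R*`: `∃(c⁺,d)`, `∃(d,c⁺)`, `∀(c⁺,d)`, `∀(d,c⁺‾)` with `c⁺` a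
positive c-term and `d` a c-term. -/
def FragRstar : Set Formula :=
  {φ | ∃ c d : ETerm, c.isPosC ∧ d.isC ∧
       (φ = .ex c d ∨ φ = .ex d c ∨ φ = .al c d ∨ φ = .al d c.bar)}

/-- The fragment `R*†`: all formulas. -/
def FragRstardag : Set Formula := Set.univ

/-- The six syllogistic fragments. -/
def IsFragment (F : Set Formula) : Prop :=
  F = FragS ∨ F = FragSdag ∨ F = FragR ∨ F = FragRdag ∨ F = FragRstar ∨ F = FragRstardag

/-! ### Rule sets -/

/-- The rule set `S`: (D1), (D2), (D3), (B), (A), (T), (I), (X). -/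
def RuleSetS : Set SylRule :=
  {R | (∃ (p q : ℕ) (l : Lit),
          R = ⟨{.al (atomE q) (.lit l), .ex (atomE p) (atomE q)}, .ex (atomE p) (.lit l)⟩) ∨
       (∃ (p q : ℕ) (l : Lit),
          R = ⟨{.ex (atomE p) (.lit l), .al (atomE p) (atomE q)}, .ex (atomE q) (.lit l)⟩) ∨
       (∃ (p q : ℕ) (l : Lit),
          R = ⟨{.al (atomE q) (.lit l.bar), .ex (atomE p) (.lit l)}, .ex (atomE p) (.lit (.neg q))⟩) ∨
       (∃ (p q : ℕ) (l : Lit),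
          R = ⟨{.al (atomE p) (atomE q), .al (atomE q) (.lit l)}, .al (atomE p) (.lit l)⟩) ∨
       (∃ (p : ℕ) (l : Lit),
          R = ⟨{.al (atomE p) (.lit (.neg p))}, .al (atomE p) (.lit l)⟩) ∨
       (∃ p : ℕ, R = ⟨∅, .al (atomE p) (atomE p)⟩) ∨
       (∃ (p : ℕ) (l : Lit),
          R = ⟨{.ex (atomE p) (.lit l)}, .ex (atomE p) (atomE p)⟩) ∨
       (∃ φ ψ : Formula, φ ∈ FragS ∧ ψ ∈ FragS ∧ R = ⟨{ψ, ψ.bar}, φ⟩)}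

/-- The rule set `S†`: (D), (B), (A), (T), (I), (N), (X). -/
def RuleSetSdag : Set SylRule :=
  {R | (∃ l m n : Lit,
          R = ⟨{.ex (.lit l) (.lit n), .al (.lit l) (.lit m)}, .ex (.lit m) (.lit n)⟩) ∨
       (∃ l m n : Lit,
          R = ⟨{.al (.lit l) (.lit m), .al (.lit m) (.lit n)}, .al (.lit l) (.lit n)⟩) ∨
       (∃ l m : Lit, R = ⟨{.al (.lit l) (.lit l.bar)}, .al (.lit l) (.lit m)⟩) ∨
       (∃ l : Lit, R = ⟨∅, .al (.lit l) (.lit l)⟩) ∨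
       (∃ l m : Lit, R = ⟨{.ex (.lit l) (.lit m)}, .ex (.lit l) (.lit l)⟩) ∨
       (∃ l : Lit, R = ⟨{.al (.lit l.bar) (.lit l)}, .ex (.lit l) (.lit l)⟩) ∨
       (∃ φ ψ : Formula, φ ∈ FragSdag ∧ ψ ∈ FragSdag ∧ R = ⟨{ψ, ψ.bar}, φ⟩)}

/-- The rules (B), (T) and (A) of the rule set `S†`. -/
def RuleSetBTA : Set SylRule :=
  {R | (∃ l m n : Lit,
          R = ⟨{.al (.lit l) (.lit m), .al (.lit m) (.lit n)}, .al (.lit l) (.lit n)⟩) ∨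
       (∃ l : Lit, R = ⟨∅, .al (.lit l) (.lit l)⟩) ∨
       (∃ l m : Lit, R = ⟨{.al (.lit l) (.lit l.bar)}, .al (.lit l) (.lit m)⟩)}

/-- The rule set `R`: (D1), (D2), (D3), (B), (T), (I), (A), (II), (∀∀), (∃∃), (∀∃). -/
def RuleSetR : Set SylRule :=
  {R | (∃ (p q : ℕ) (c : ETerm), c.isC ∧
          R = ⟨{.ex (atomE p) (atomE q), .al (atomE q) c}, .ex (atomE p) c⟩) ∨
       (∃ (p q : ℕ) (c : ETerm), c.isC ∧
          R = ⟨{.al (atomE p) (atomE q), .ex (atomE p) c}, .ex (atomE q) c⟩) ∨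
       (∃ (p q : ℕ) (c : ETerm), c.isC ∧
          R = ⟨{.al (atomE q) c.bar, .ex (atomE p) c}, .ex (atomE p) (.lit (.neg q))⟩) ∨
       (∃ (p q : ℕ) (c : ETerm), c.isC ∧
          R = ⟨{.al (atomE p) (atomE q), .al (atomE q) c}, .al (atomE p) c⟩) ∨
       (∃ p : ℕ, R = ⟨∅, .al (atomE p) (atomE p)⟩) ∨
       (∃ (p : ℕ) (c : ETerm), c.isC ∧
          R = ⟨{.ex (atomE p) c}, .ex (atomE p) (atomE p)⟩) ∨
       (∃ (p : ℕ) (c : ETerm), c.isC ∧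
          R = ⟨{.al (atomE p) (.lit (.neg p))}, .al (atomE p) c⟩) ∨
       (∃ (p q : ℕ) (t : BLit),
          R = ⟨{.ex (atomE p) (.ex (.pos q) t)}, .ex (atomE q) (atomE q)⟩) ∨
       (∃ (p q q' : ℕ) (t : BLit),
          R = ⟨{.al (atomE p) (.al (.pos q') t), .ex (atomE q) (atomE q')},
               .al (atomE p) (.ex (.pos q) t)⟩) ∨
       (∃ (p q q' : ℕ) (t : BLit),
          R = ⟨{.ex (atomE p) (.ex (.pos q) t), .al (atomE q) (atomE q')},
               .ex (atomE p) (.ex (.pos q') t)⟩) ∨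
       (∃ (p q q' : ℕ) (t : BLit),
          R = ⟨{.al (atomE p) (.ex (.pos q) t), .al (atomE q) (atomE q')},
               .al (atomE p) (.ex (.pos q') t)⟩)}

/-- The rule set `R*`: (T), (I), (B), (D1), (D2), (J), (K), (L), (II), (Z), (W). -/
def RuleSetRstar : Set SylRule :=
  {R | (∃ c : ETerm, c.isPosC ∧ R = ⟨∅, .al c c⟩) ∨
       (∃ c d : ETerm, c.isPosC ∧ d.isC ∧ R = ⟨{.ex c d}, .ex c c⟩) ∨
       (∃ b c d : ETerm, b.isPosC ∧ c.isPosC ∧ d.isC ∧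
          R = ⟨{.al b c, .al c d}, .al b d⟩) ∨
       (∃ b c d : ETerm, b.isPosC ∧ c.isPosC ∧ d.isC ∧
          R = ⟨{.ex b c, .al c d}, .ex b d⟩) ∨
       (∃ b c d : ETerm, b.isPosC ∧ c.isPosC ∧ d.isC ∧
          R = ⟨{.al b c, .ex b d}, .ex c d⟩) ∨
       (∃ p q r : ℕ,
          R = ⟨{.al (atomE p) (atomE q)},
               .al (.al (.pos q) (.pos r)) (.al (.pos p) (.pos r))⟩) ∨
       (∃ p q r : ℕ,
          R = ⟨{.al (atomE p) (atomE q)},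
               .al (.ex (.pos p) (.pos r)) (.ex (.pos q) (.pos r))⟩) ∨
       (∃ p q r : ℕ,
          R = ⟨{.ex (atomE p) (atomE q)},
               .al (.al (.pos p) (.pos r)) (.ex (.pos q) (.pos r))⟩) ∨
       (∃ p q r : ℕ,
          R = ⟨{.ex (atomE q) (.ex (.pos p) (.pos r))}, .ex (atomE p) (atomE p)⟩) ∨
       (∃ (p r : ℕ) (c : ETerm), c.isPosC ∧
          R = ⟨{.al (atomE p) (.lit (.neg p))}, .al c (.al (.pos p) (.pos r))⟩) ∨
       (∃ p r : ℕ,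
          R = ⟨{.al (atomE p) (.lit (.neg p))},
               .ex (.al (.pos p) (.pos r)) (.al (.pos p) (.pos r))⟩)}

/-! ### Auxiliary notions for particular statements -/

/-- Universal S†-formulas. -/
def IsUnivSdag (φ : Formula) : Prop := ∃ l m : Lit, φ = .al (.lit l) (.lit m)

/-- Existential S†-formulas. -/
def IsExSdag (φ : Formula) : Prop := ∃ l m : Lit, φ = .ex (.lit l) (.lit m)

/-- The closure `V^Φ` of a set of unary literals: all `m` with
`Φ ⊢_BTA ∀(l,m)` for some `l ∈ V`. -/
def litClosure (Φ : Set Formula) (V : Set Lit) : Set Lit :=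
  {m | ∃ l ∈ V, Derives RuleSetBTA Φ (.al (.lit l) (.lit m))}

/-- Membership in a set of formulas, modulo the silent identification. -/
def MemMod (Γ : Set Formula) (φ : Formula) : Prop := ∃ ψ ∈ Γ, FormEquiv φ ψ

/-- The reachability relation `c ⇒ d` determined by `Γ`. -/
def Reach (Γ : Set Formula) (c d : ETerm) : Prop :=
  c = d ∨ ∃ (k : ℕ) (p : ℕ → ℕ), c = atomE (p 0) ∧
    MemMod Γ (.al (atomE (p k)) d) ∧
    ∀ i < k, MemMod Γ (.al (atomE (p i)) (atomE (p (i + 1))))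

/-- `V ⇒ d` for a set `V` of c-terms. -/
def ReachSet (Γ : Set Formula) (V : Set ETerm) (d : ETerm) : Prop :=
  ∃ c ∈ V, Reach Γ c d

/-- The witness sets `B_k`; the formal object `b_{V,i}` is encoded as the
pair `(V, i)`. -/
def BSet (Γ : Set Formula) : ℕ → Set (Set ETerm × ℕ)
  | 0 => {x | ∃ (p : ℕ) (c : ETerm), c.isC ∧ MemMod Γ (.ex (atomE p) c) ∧
            x = ({atomE p, c}, 0)}
  | k + 1 => BSet Γ k ∪
      {x | ∃ (p i : ℕ), (i = 1 ∨ i = 2) ∧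
        (∃ y ∈ BSet Γ k, ∃ t : BLit, ReachSet Γ y.1 (.ex (.pos p) t)) ∧
        x = ({atomE p}, i)}

/-- The witness set `B = ⋃_k B_k`. -/
def BAll (Γ : Set Formula) : Set (Set ETerm × ℕ) := ⋃ k, BSet Γ k

/-- Condition (C). -/
def CondC (Γ : Set Formula) : Prop :=
  ∃ (V : Set ETerm) (i : ℕ) (W : Set ETerm) (j : ℕ),
    (V, i) ∈ BAll Γ ∧ (W, j) ∈ BAll Γ ∧
    ∃ q o r : ℕ,
      ((ReachSet Γ V (atomE q) ∧ ReachSet Γ V (.lit (.neg q))) ∨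
       (ReachSet Γ V (.ex (.pos q) (.neg r)) ∧ ReachSet Γ V (.al (.pos o) (.pos r)) ∧
         Reach Γ (atomE q) (atomE o)) ∨
       (ReachSet Γ V (.al (.pos q) (.neg r)) ∧ ReachSet Γ V (.ex (.pos o) (.pos r)) ∧
         Reach Γ (atomE o) (atomE q)) ∨
       (ReachSet Γ V (.al (.pos q) (.neg r)) ∧ ReachSet Γ V (.al (.pos o) (.pos r)) ∧
         ReachSet Γ W (atomE q) ∧ ReachSet Γ W (atomE o)))

/-- The set `Γ` of R-formulas used in the proof that `R` admits no sound
and complete direct syllogistic system (indices `0,…,n-1`). -/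
def GammaSet (n : ℕ) (p : ℕ → ℕ) (r : ℕ) : Set Formula :=
  {φ | (∃ i, i + 1 < n ∧ φ = .al (atomE (p i)) (.ex (.pos (p (i + 1))) (.pos r))) ∨
       φ = .al (atomE (p 0)) (.al (.pos (p (n - 1))) (.pos r)) ∨
       (∃ q : ℕ, φ = .al (atomE q) (atomE q)) ∨
       (∃ i j, i < j ∧ j < n ∧ φ = .al (atomE (p i)) (.lit (.neg (p j))))}

/-- `Γ` is R*-complete: for every R*-formula `θ`, `θ ∈ Γ` or `θ̄ ∈ Γ`. -/
def RstarComplete (Γ : Set Formula) : Prop :=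
  ∀ θ ∈ FragRstar, θ ∈ Γ ∨ Formula.bar θ ∈ Γ

/-- Domain of the canonical structure for `Γ`: triples `(c₁,c₂,Q)` of two
positive c-terms and a quantifier (`Bool`, with `true` rendering `∃` and
`false` rendering `∀`) such that `Γ ⊩_{R*} ∃(c₁,c₂)`. -/
abbrev CanonA (Γ : Set Formula) : Type :=
  {x : ETerm × ETerm × Bool //
    x.1.isPosC ∧ x.2.1.isPosC ∧ IDerives RuleSetRstar Γ (.ex x.1 x.2.1)}

/-- The canonical structure constructed from `Γ`. -/
def CanonInterp (Γ : Set Formula) : Interp (CanonA Γ) where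
  up p := {x | IDerives RuleSetRstar Γ (.al x.val.1 (atomE p)) ∨
               IDerives RuleSetRstar Γ (.al x.val.2.1 (atomE p))}
  br r := {ab |
      (∃ c ∈ ({ab.1.val.1, ab.1.val.2.1} : Set ETerm),
       ∃ d ∈ ({ab.2.val.1, ab.2.val.2.1} : Set ETerm),
       ∃ q : ℕ,
         IDerives RuleSetRstar Γ (.al c (.al (.pos q) (.pos r))) ∧
         IDerives RuleSetRstar Γ (.al d (atomE q))) ∨
      (ab.2.val.2.2 = true ∧
       ∃ q : ℕ, ab.2.val.1 = atomE q ∧ ab.2.val.2.1 = atomE q ∧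
       ∃ c ∈ ({ab.1.val.1, ab.1.val.2.1} : Set ETerm),
         IDerives RuleSetRstar Γ (.al c (.ex (.pos q) (.pos r))))}


/-! ### Auxiliary material for the proof -/

def Lit.atom : Lit → ℕ
  | .pos p => p
  | .neg p => p

def ETerm.uatoms : ETerm → Finset ℕ
  | .lit l => {l.atom}
  | .ex l _ => {l.atom}
  | .al l _ => {l.atom}

def Formula.uatoms : Formula → Finset ℕ
  | .ex e f => e.uatoms ∪ f.uatoms
  | .al e f => e.uatoms ∪ f.uatoms

lemma Lit.atom_subst (g : Subst) (l : Lit) : (l.subst g).atom = g.u l.atom := by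
  cases l <;> rfl

lemma ETerm.uatoms_subst (g : Subst) (e : ETerm) :
    (e.subst g).uatoms = e.uatoms.image g.u := by
  cases e <;> simp [ETerm.uatoms, ETerm.subst, Lit.atom_subst]

lemma Formula.uatoms_subst (g : Subst) (φ : Formula) :
    (φ.subst g).uatoms = φ.uatoms.image g.u := by
  cases φ <;> simp [Formula.uatoms, Formula.subst, ETerm.uatoms_subst, Finset.image_union]

lemma Lit.bar_bar (l : Lit) : l.bar.bar = l := by cases l <;> rfl
lemma BLit.bar_bar (t : BLit) : t.bar.bar = t := by cases t <;> rfl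
lemma ETerm.bar_bar (e : ETerm) : e.bar.bar = e := by
  cases e <;> simp [ETerm.bar, Lit.bar_bar, BLit.bar_bar]
lemma Formula.swap_swap (φ : Formula) : φ.swap.swap = φ := by
  cases φ <;> simp [Formula.swap, ETerm.bar_bar]

lemma Interp.litI_bar {A : Type} (M : Interp A) (l : Lit) :
    M.litI l.bar = (M.litI l)ᶜ := by
  cases l <;> simp [Lit.bar, Interp.litI]

lemma Interp.blitI_bar {A : Type} (M : Interp A) (t : BLit) :
    M.blitI t.bar = (M.blitI t)ᶜ := by
  cases t <;> simp [BLit.bar, Interp.blitI]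

lemma Interp.etermI_bar {A : Type} (M : Interp A) (e : ETerm) :
    M.etermI e.bar = (M.etermI e)ᶜ := by
  cases e with
  | lit l => simp [ETerm.bar, Interp.etermI, Interp.litI_bar]
  | ex l t =>
      ext a
      simp [ETerm.bar, Interp.etermI, Interp.blitI_bar]
  | al l t =>
      ext a
      simp [ETerm.bar, Interp.etermI, Interp.blitI_bar]

lemma Interp.sat_swap {A : Type} (M : Interp A) (φ : Formula) :
    M.Sat φ.swap ↔ M.Sat φ := by
  cases φ with
  | ex e f =>
      simp only [Formula.swap, Interp.Sat, Set.inter_comm]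
  | al e f =>
      simp only [Formula.swap, Interp.Sat, Interp.etermI_bar]
      exact Set.compl_subset_compl

lemma ETerm.isC_bar {c : ETerm} (h : c.isC) : c.bar.isC := by
  cases c with
  | lit l => trivial
  | ex l t => cases l <;> simpa [ETerm.bar, ETerm.isC, Lit.isPos] using h
  | al l t => cases l <;> simpa [ETerm.bar, ETerm.isC, Lit.isPos] using h

lemma ETerm.isC_subst {c : ETerm} (g : Subst) (h : c.isC) : (c.subst g).isC := by
  cases c with
  | lit l => trivial
  | ex l t => cases l <;> simpa [ETerm.subst, ETerm.isC, Lit.subst, Lit.isPos] using h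
  | al l t => cases l <;> simpa [ETerm.subst, ETerm.isC, Lit.subst, Lit.isPos] using h

lemma FragR_swap {φ : Formula} (h : φ ∈ FragR) : φ.swap ∈ FragR := by
  obtain ⟨p, c, hc, h⟩ := h
  rcases h with h | h | h | h
  · exact ⟨p, c, hc, Or.inr (Or.inl (by simp [h, Formula.swap]))⟩
  · exact ⟨p, c, hc, Or.inl (by simp [h, Formula.swap])⟩
  · exact ⟨p, c.bar, ETerm.isC_bar hc, Or.inr (Or.inr (Or.inr (by
      simp [h, Formula.swap, atomE, ETerm.bar, Lit.bar])))⟩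
  · exact ⟨p, c.bar, ETerm.isC_bar hc, Or.inr (Or.inr (Or.inl (by
      simp [h, Formula.swap, atomE, ETerm.bar, Lit.bar])))⟩

lemma FragR_subst {φ : Formula} (g : Subst) (h : φ ∈ FragR) : φ.subst g ∈ FragR := by
  obtain ⟨p, c, hc, h⟩ := h
  rcases h with h | h | h | h
  · exact ⟨g.u p, c.subst g, ETerm.isC_subst g hc, Or.inl (by
      simp [h, Formula.subst, atomE, ETerm.subst, Lit.subst])⟩
  · exact ⟨g.u p, c.subst g, ETerm.isC_subst g hc, Or.inr (Or.inl (by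
      simp [h, Formula.subst, atomE, ETerm.subst, Lit.subst]))⟩
  · exact ⟨g.u p, c.subst g, ETerm.isC_subst g hc, Or.inr (Or.inr (Or.inl (by
      simp [h, Formula.subst, atomE, ETerm.subst, Lit.subst])))⟩
  · exact ⟨g.u p, c.subst g, ETerm.isC_subst g hc, Or.inr (Or.inr (Or.inr (by
      simp [h, Formula.subst, atomE, ETerm.subst, Lit.subst])))⟩

/-- The key conclusion formula `θ = ∀(p₀, ∃(p_{n-1}, r))` with atoms `pᵢ = i`, `r = 0`. -/
def thetaF (n : ℕ) : Formula := .al (atomE 0) (.ex (.pos (n-1)) (.pos 0))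

lemma thetaF_swap (n : ℕ) :
    (thetaF n).swap = .al (.al (.pos (n-1)) (.neg 0)) (.lit (.neg 0)) := rfl

/-- The model `B`: a chain `0 → 1 → ⋯ → n-1` plus the edge `(0, n-1)`. -/
def BM (n : ℕ) : Interp ℕ where
  up q := {x | q < n ∧ x = q}
  br s := {ab | s = 0 ∧ ((ab.2 = ab.1 + 1 ∧ ab.2 < n) ∨ (ab.1 = 0 ∧ ab.2 = n - 1))}

/-- The model `B` with all binary relations total. -/
def TM (n : ℕ) : Interp ℕ where
  up q := {x | q < n ∧ x = q}
  br _ := Set.univ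

/-- The empty model. -/
def EM : Interp ℕ where
  up _ := ∅
  br _ := ∅

/-- The broken-chain model `M_j`. -/
def MM (j : ℕ) : Interp ℕ where
  up q := {x | q < j ∧ x = q}
  br s := {ab | s = 0 ∧ ab.2 = ab.1 + 1 ∧ ab.2 < j}

lemma sat_al_iff {A : Type} (M : Interp A) (e f : ETerm) :
    M.Sat (.al e f) ↔ ∀ a ∈ M.etermI e, a ∈ M.etermI f := Iff.rfl

lemma gamma_subset_R (n : ℕ) : GammaSet n id 0 ⊆ FragR := by
  intro φ hφ
  simp only [GammaSet, Set.mem_setOf_eq] at hφ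
  rcases hφ with ⟨i, hi, rfl⟩ | rfl | ⟨q, rfl⟩ | ⟨i, j, hij, hjn, rfl⟩
  · exact ⟨i, .ex (.pos (i+1)) (.pos 0), trivial, Or.inr (Or.inr (Or.inl rfl))⟩
  · exact ⟨0, .al (.pos (n-1)) (.pos 0), trivial, Or.inr (Or.inr (Or.inl rfl))⟩
  · exact ⟨q, .lit (.pos q), trivial, Or.inr (Or.inr (Or.inl rfl))⟩
  · exact ⟨i, .lit (.neg j), trivial, Or.inr (Or.inr (Or.inl rfl))⟩

lemma thetaF_mem_R (n : ℕ) : thetaF n ∈ FragR :=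
  ⟨0, .ex (.pos (n-1)) (.pos 0), trivial, Or.inr (Or.inr (Or.inl rfl))⟩

lemma EM_sat_gamma (n : ℕ) : ∀ φ ∈ GammaSet n id 0, EM.Sat φ := by
  intro φ hφ
  simp only [GammaSet, Set.mem_setOf_eq] at hφ
  rcases hφ with ⟨i, hi, rfl⟩ | rfl | ⟨q, rfl⟩ | ⟨i, j, hij, hjn, rfl⟩ <;>
    (intro x hx; simp [Interp.etermI, Interp.litI, EM, atomE] at hx)

lemma BM_sat_gamma (n : ℕ) : ∀ φ ∈ GammaSet n id 0, (BM n).Sat φ := by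
  intro φ hφ
  simp only [GammaSet, Set.mem_setOf_eq] at hφ
  rcases hφ with ⟨i, hi, rfl⟩ | rfl | ⟨q, rfl⟩ | ⟨i, j, hij, hjn, rfl⟩
  · rintro x hx
    simp only [Interp.etermI, Interp.litI, Interp.blitI, BM, atomE,
      Set.mem_setOf_eq, id_eq] at hx ⊢
    exact ⟨x + 1, ⟨by omega, by omega⟩, trivial, Or.inl ⟨rfl, by omega⟩⟩
  · rintro x hx
    simp only [Interp.etermI, Interp.litI, Interp.blitI, BM, atomE,
      Set.mem_setOf_eq, id_eq] at hx ⊢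
    rintro y ⟨hy1, hy2⟩
    exact ⟨trivial, Or.inr ⟨by omega, by omega⟩⟩
  · intro x hx; exact hx
  · rintro x hx
    simp only [Interp.etermI, Interp.litI, Interp.blitI, BM, atomE,
      Set.mem_setOf_eq, Set.mem_compl_iff, id_eq] at hx ⊢
    omega

lemma TM_sat_gamma (n : ℕ) : ∀ φ ∈ GammaSet n id 0, (TM n).Sat φ := by
  intro φ hφ
  simp only [GammaSet, Set.mem_setOf_eq] at hφ
  rcases hφ with ⟨i, hi, rfl⟩ | rfl | ⟨q, rfl⟩ | ⟨i, j, hij, hjn, rfl⟩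
  · rintro x hx
    simp only [Interp.etermI, Interp.litI, Interp.blitI, TM, atomE,
      Set.mem_setOf_eq, id_eq] at hx ⊢
    exact ⟨x + 1, ⟨by omega, by omega⟩, Set.mem_univ _⟩
  · rintro x hx
    simp only [Interp.etermI, Interp.litI, Interp.blitI, TM, atomE,
      Set.mem_setOf_eq, id_eq] at hx ⊢
    exact fun y _ => Set.mem_univ _
  · intro x hx; exact hx
  · rintro x hx
    simp only [Interp.etermI, Interp.litI, Interp.blitI, TM, atomE,
      Set.mem_setOf_eq, Set.mem_compl_iff, id_eq] at hx ⊢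
    omega

lemma gamma_ne_theta (n : ℕ) (hn : 4 ≤ n) :
    ∀ φ ∈ GammaSet n id 0, φ ≠ thetaF n ∧ φ ≠ (thetaF n).swap := by
  intro φ hφ
  simp only [GammaSet, Set.mem_setOf_eq] at hφ
  rcases hφ with ⟨i, hi, rfl⟩ | rfl | ⟨q, rfl⟩ | ⟨i, j, hij, hjn, rfl⟩ <;>
    refine ⟨fun h => ?_, fun h => ?_⟩ <;>
      simp only [thetaF, Formula.swap, ETerm.bar, Lit.bar, BLit.bar, atomE, id_eq,
        Formula.al.injEq, ETerm.ex.injEq, ETerm.al.injEq, ETerm.lit.injEq,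
        Lit.pos.injEq, Lit.neg.injEq, BLit.pos.injEq, BLit.neg.injEq,
        and_true, true_and, reduceCtorEq, and_false, false_and] at h <;>
      omega

lemma gamma_entails_theta (n : ℕ) (hn : 1 ≤ n) :
    Entails (GammaSet n id 0) (thetaF n) := by
  intro A hA M hM
  intro a ha
  have key : ∀ i, i < n → ∃ b, b ∈ M.up i := by
    intro i
    induction i with
    | zero => exact fun _ => ⟨a, ha⟩
    | succ i ih =>
        intro h
        obtain ⟨b, hb⟩ := ih (by omega)
        have hf : (Formula.al (atomE i) (.ex (.pos (i+1)) (.pos 0))) ∈ GammaSet n id 0 :=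
          Or.inl ⟨i, h, rfl⟩
        obtain ⟨y, hy, -⟩ := hM _ hf hb
        exact ⟨y, hy⟩
  obtain ⟨b, hb⟩ := key (n-1) (by omega)
  have h2 : (Formula.al (atomE 0) (.al (.pos (n-1)) (.pos 0))) ∈ GammaSet n id 0 :=
    Or.inr (Or.inl rfl)
  exact ⟨b, hb, hM _ h2 ha b hb⟩

lemma MM_not_sat_theta (n j : ℕ) (hj1 : 1 ≤ j) (hj2 : j ≤ n - 2) (hn : 4 ≤ n) :
    ¬ (MM j).Sat (thetaF n) := by
  intro h
  have h0 : (0:ℕ) ∈ (MM j).etermI (atomE 0) :=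
    (⟨hj1, rfl⟩ : (0:ℕ) < j ∧ (0:ℕ) = 0)
  obtain ⟨y, hy, -⟩ := h h0
  simp only [Interp.litI, MM, Set.mem_setOf_eq] at hy
  omega

lemma MM_not_sat_theta_swap (n j : ℕ) (hj1 : 1 ≤ j) (hj2 : j ≤ n - 2) (hn : 4 ≤ n) :
    ¬ (MM j).Sat ((thetaF n).swap) := by
  rw [thetaF_swap]
  intro h
  have h0 : (0:ℕ) ∈ (MM j).etermI (.al (.pos (n-1)) (.neg 0)) := by
    rintro y ⟨hy, rfl⟩
    omega
  have := h h0
  simp only [Interp.etermI, Interp.litI, MM, Set.mem_compl_iff, Set.mem_setOf_eq] at this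
  exact this ⟨hj1, trivial⟩

lemma main_lemma (n j : ℕ) (hn : 4 ≤ n) (hj1 : 1 ≤ j) (hj2 : j ≤ n - 2)
    (δ : Formula) (hF : δ ∈ FragR) (hjav : j ∉ δ.uatoms)
    (hθ : δ ≠ thetaF n) (hθs : δ ≠ (thetaF n).swap)
    (hE : EM.Sat δ) (hB : (BM n).Sat δ) (hT : (TM n).Sat δ) :
    (MM j).Sat δ := by
  obtain ⟨p, c, hc, hshape⟩ := hF
  rcases hshape with rfl | rfl | rfl | rfl
  · -- ∃(p, c) : impossible, fails in the empty model
    exfalso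
    obtain ⟨a, ha, -⟩ := hE
    simp [Interp.etermI, Interp.litI, EM, atomE] at ha
  · -- ∃(c, p) : impossible, fails in the empty model
    exfalso
    obtain ⟨a, -, ha⟩ := hE
    simp [Interp.etermI, Interp.litI, EM, atomE] at ha
  · -- ∀(p, c)
    rintro x ⟨hpj, rfl⟩
    -- now the old `p` is `x`, with hpj : x < j
    have hpn : x < n := by omega
    have hBp : (x:ℕ) ∈ (BM n).etermI c := hB (⟨hpn, rfl⟩ : x < n ∧ (x:ℕ) = x)
    have hTp : (x:ℕ) ∈ (TM n).etermI c := hT (⟨hpn, rfl⟩ : x < n ∧ (x:ℕ) = x)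
    cases c with
    | lit l =>
        cases l with
        | pos u =>
            obtain ⟨hun, hpu⟩ := hBp
            exact ⟨by omega, hpu⟩
        | neg u =>
            rintro ⟨huj, hpu⟩
            exact hBp ⟨by omega, hpu⟩
    | ex l t =>
        cases l with
        | neg u => exact hc.elim
        | pos u =>
            have hju : u ≠ j := by
              rintro rfl
              exact hjav (by simp [Formula.uatoms, ETerm.uatoms, atomE, Lit.atom])
            cases t with
            | pos b =>
                obtain ⟨y, ⟨hun, rfl⟩, hb0, hedge⟩ := hBp
                -- now the old `u` is `y`, and hju : y ≠ j
                subst hb0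
                rcases hedge with ⟨he, -⟩ | ⟨hp0, hun1⟩
                · exact ⟨y, ⟨by omega, rfl⟩, rfl, he, by omega⟩
                · exfalso
                  apply hθ
                  subst hp0; subst hun1
                  rfl
            | neg b =>
                exfalso
                obtain ⟨y, -, hmem⟩ := hTp
                simp [TM, Interp.blitI] at hmem
    | al l t =>
        cases l with
        | neg u => exact hc.elim
        | pos u =>
            rintro y ⟨huj, rfl⟩
            -- now the old `u` is `y`, with huj : y < j
            cases t with
            | pos b =>
                have hE2 := hBp y ⟨by omega, rfl⟩
                obtain ⟨hb0, hedge⟩ := hE2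
                subst hb0
                rcases hedge with ⟨he, -⟩ | ⟨hp0, hun1⟩
                · exact ⟨rfl, he, by omega⟩
                · omega
            | neg b =>
                rcases Nat.eq_zero_or_pos b with hb | hb
                · subst hb
                  exfalso
                  have hmem := hTp y ⟨by omega, rfl⟩
                  simp [TM, Interp.blitI] at hmem
                · rintro ⟨h0, -⟩
                  omega
  · -- ∀(c, ¬p)
    intro x hx
    rintro ⟨hpj, hxp⟩
    subst hxp
    -- now the old `p` is `x`, with hpj : x < j, hx : x ∈ c^M
    have hpn : x < n := by omega
    have hBn : (x:ℕ) ∉ (BM n).etermI c := fun hmem => hB hmem ⟨hpn, rfl⟩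
    have hTn : (x:ℕ) ∉ (TM n).etermI c := fun hmem => hT hmem ⟨hpn, rfl⟩
    cases c with
    | lit l =>
        cases l with
        | pos u =>
            obtain ⟨huj, hpu⟩ := hx
            exact hBn ⟨by omega, hpu⟩
        | neg u =>
            apply hBn
            rintro ⟨hun, hpu⟩
            exact hx ⟨by omega, hpu⟩
    | ex l t =>
        cases l with
        | neg u => exact hc.elim
        | pos u =>
            obtain ⟨y, ⟨huj, rfl⟩, hedge⟩ := hx
            -- old `u` is `y`, huj : y < j
            cases t with
            | pos b =>
                obtain ⟨hb0, he, huj'⟩ := hedge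
                subst hb0
                exact hBn ⟨y, ⟨by omega, rfl⟩, rfl, Or.inl ⟨he, by omega⟩⟩
            | neg b =>
                rcases Nat.eq_zero_or_pos b with hb | hb
                · subst hb
                  have hne : y ≠ x + 1 := fun h => hedge ⟨rfl, h, by omega⟩
                  apply hBn
                  refine ⟨y, ⟨by omega, rfl⟩, ?_⟩
                  rintro ⟨-, ⟨h1, -⟩ | ⟨h2, h3⟩⟩
                  · exact hne h1
                  · omega
                · apply hBn
                  refine ⟨y, ⟨by omega, rfl⟩, ?_⟩
                  rintro ⟨h0, -⟩
                  omega
    | al l t =>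
        cases l with
        | neg u => exact hc.elim
        | pos u =>
            have hju : u ≠ j := by
              rintro rfl
              exact hjav (by simp [Formula.uatoms, ETerm.uatoms, atomE, Lit.atom])
            by_cases huj : u < j
            · cases t with
              | pos b =>
                  apply hTn
                  rintro y ⟨-, rfl⟩
                  exact Set.mem_univ _
              | neg b =>
                  rcases Nat.eq_zero_or_pos b with hb | hb
                  · subst hb
                    have hedge := hx u ⟨huj, rfl⟩
                    have hne : u ≠ x + 1 := fun h => hedge ⟨rfl, h, by omega⟩
                    apply hBn
                    rintro y ⟨hun, rfl⟩
                    -- old `u` is `y`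
                    rintro ⟨-, ⟨h1, -⟩ | ⟨h2, h3⟩⟩
                    · exact hne h1
                    · omega
                  · apply hBn
                    rintro y ⟨hun, rfl⟩
                    rintro ⟨h0, -⟩
                    omega
            · by_cases hun : u < n
              · cases t with
                | pos b =>
                    apply hTn
                    rintro y ⟨-, rfl⟩
                    exact Set.mem_univ _
                | neg b =>
                    rcases Nat.eq_zero_or_pos b with hb | hb
                    · subst hb
                      by_cases hth : x = 0 ∧ u = n - 1
                      · exact hθs (by rw [thetaF_swap, hth.1, hth.2])
                      · apply hBn
                        rintro y ⟨-, rfl⟩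
                        rintro ⟨-, ⟨h1, -⟩ | ⟨h2, h3⟩⟩
                        · omega
                        · exact hth ⟨h2, h3⟩
                    · apply hBn
                      rintro y ⟨-, rfl⟩
                      rintro ⟨h0, -⟩
                      omega
              · apply hBn
                rintro y ⟨h1, -⟩
                exact (hun h1).elim

def ruleAtoms (R : SylRule) : Finset ℕ := R.con.uatoms ∪ R.ants.sup Formula.uatoms

def InvP (n : ℕ) (φ : Formula) : Prop :=
  φ ∈ FragR ∧ EM.Sat φ ∧ (BM n).Sat φ ∧ (TM n).Sat φ ∧
    φ ≠ thetaF n ∧ φ ≠ (thetaF n).swap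

lemma derives_inv (X : Set SylRule) (hfin : X.Finite)
    (hIn : ∀ R ∈ X, RuleIn FragR R) (hsound : SoundFor FragR (Derives X))
    (n : ℕ) (hn : n = (hfin.toFinset.sup fun R => (ruleAtoms R).card) + 4)
    {Θ : Set Formula} {φ : Formula} (h : Derives X Θ φ) :
    (∀ ψ ∈ Θ, InvP n ψ) → InvP n φ := by
  induction h with
  | mem hmem => exact fun hbase => hbase _ hmem
  | ident hd hfe ih =>
      intro hbase
      obtain ⟨hFR, hEs, hBs, hTs, hne1, hne2⟩ := ih hbase
      rcases hfe with rfl | rfl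
      · exact ⟨hFR, hEs, hBs, hTs, hne1, hne2⟩
      · refine ⟨FragR_swap hFR, (Interp.sat_swap _ _).2 hEs, (Interp.sat_swap _ _).2 hBs,
          (Interp.sat_swap _ _).2 hTs, ?_, ?_⟩
        · intro hEq
          exact hne2 (by rw [← hEq]; exact (Formula.swap_swap _).symm)
        · intro hEq
          apply hne1
          have := congrArg Formula.swap hEq
          rwa [Formula.swap_swap, Formula.swap_swap] at this
  | rule R g hRX hprem ih =>
      intro hbase
      have hRuleIn := hIn R hRX
      have hΔsub : (↑(R.ants.image (Formula.subst g)) : Set Formula) ⊆ FragR := by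
        intro ψ hψ
        simp only [Finset.coe_image, Set.mem_image, Finset.mem_coe] at hψ
        obtain ⟨χ, hχ, rfl⟩ := hψ
        exact FragR_subst g (hRuleIn.1 χ hχ)
      have hconF : R.con.subst g ∈ FragR := FragR_subst g hRuleIn.2
      have hder : Derives X ↑(R.ants.image (Formula.subst g)) (R.con.subst g) :=
        Derives.rule R g hRX (fun ψ hψ => Derives.mem (by
          simp only [Finset.coe_image, Set.mem_image, Finset.mem_coe]
          exact ⟨ψ, hψ, rfl⟩))
      have hent : Entails ↑(R.ants.image (Formula.subst g)) (R.con.subst g) :=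
        hsound _ _ hΔsub hconF hder
      have hInvΔ : ∀ ψ ∈ R.ants, InvP n (ψ.subst g) := fun ψ hψ => ih ψ hψ hbase
      have hsatE : EM.SatSet ↑(R.ants.image (Formula.subst g)) := by
        intro ψ hψ
        simp only [Finset.coe_image, Set.mem_image, Finset.mem_coe] at hψ
        obtain ⟨χ, hχ, rfl⟩ := hψ
        exact (hInvΔ χ hχ).2.1
      have hsatB : (BM n).SatSet ↑(R.ants.image (Formula.subst g)) := by
        intro ψ hψ
        simp only [Finset.coe_image, Set.mem_image, Finset.mem_coe] at hψ
        obtain ⟨χ, hχ, rfl⟩ := hψ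
        exact (hInvΔ χ hχ).2.2.1
      have hsatT : (TM n).SatSet ↑(R.ants.image (Formula.subst g)) := by
        intro ψ hψ
        simp only [Finset.coe_image, Set.mem_image, Finset.mem_coe] at hψ
        obtain ⟨χ, hχ, rfl⟩ := hψ
        exact (hInvΔ χ hχ).2.2.2.1
      have hkey : R.con.subst g ≠ thetaF n ∧ R.con.subst g ≠ (thetaF n).swap := by
        have hKR : (ruleAtoms R).card ≤ hfin.toFinset.sup (fun R => (ruleAtoms R).card) :=
          Finset.le_sup (f := fun R => (ruleAtoms R).card) (hfin.mem_toFinset.2 hRX)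
        have hTcard : ((ruleAtoms R).image g.u).card ≤
            hfin.toFinset.sup (fun R => (ruleAtoms R).card) :=
          le_trans Finset.card_image_le hKR
        have hex : ∃ j ∈ Finset.Icc 1 (n-2), j ∉ (ruleAtoms R).image g.u := by
          by_contra hcon
          push_neg at hcon
          have hsub : Finset.Icc 1 (n-2) ⊆ (ruleAtoms R).image g.u :=
            fun j hj => hcon j hj
          have := Finset.card_le_card hsub
          rw [Nat.card_Icc] at this
          omega
        obtain ⟨j, hjIcc, hjT⟩ := hex
        rw [Finset.mem_Icc] at hjIcc
        have hjsub : ∀ ψ ∈ R.ants, j ∉ (ψ.subst g).uatoms := by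
          intro ψ hψ hmem
          apply hjT
          rw [Formula.uatoms_subst] at hmem
          obtain ⟨a, ha, rfl⟩ := Finset.mem_image.1 hmem
          refine Finset.mem_image.2 ⟨a, ?_, rfl⟩
          exact Finset.mem_union_right _ ((Finset.le_sup (f := Formula.uatoms) hψ) ha)
        have hMsat : (MM j).SatSet ↑(R.ants.image (Formula.subst g)) := by
          intro ψ hψ
          simp only [Finset.coe_image, Set.mem_image, Finset.mem_coe] at hψ
          obtain ⟨χ, hχ, rfl⟩ := hψ
          have hI := hInvΔ χ hχ
          exact main_lemma n j (by omega) hjIcc.1 hjIcc.2 _ hI.1 (hjsub χ hχ)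
            hI.2.2.2.2.1 hI.2.2.2.2.2 hI.2.1 hI.2.2.1 hI.2.2.2.1
        have hMcon : (MM j).Sat (R.con.subst g) := hent ℕ ⟨0⟩ (MM j) hMsat
        constructor
        · intro hEq
          rw [hEq] at hMcon
          exact MM_not_sat_theta n j hjIcc.1 hjIcc.2 (by omega) hMcon
        · intro hEq
          rw [hEq] at hMcon
          exact MM_not_sat_theta_swap n j hjIcc.1 hjIcc.2 (by omega) hMcon
      exact ⟨hconF, hent ℕ ⟨0⟩ EM hsatE, hent ℕ ⟨0⟩ (BM n) hsatB,
        hent ℕ ⟨0⟩ (TM n) hsatT, hkey.1, hkey.2⟩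

/-- there is no finite set of syllogistic rules in `R` whose
direct derivation relation is both sound and complete for `R`. -/
theorem no_sound_complete_direct_system_for_R :
    ¬ ∃ X : Set SylRule, X.Finite ∧ (∀ R ∈ X, RuleIn FragR R) ∧
        SoundFor FragR (Derives X) ∧ CompleteFor FragR (Derives X) := by
  rintro ⟨X, hfin, hIn, hsound, hcomp⟩
  set n : ℕ := (hfin.toFinset.sup fun R => (ruleAtoms R).card) + 4 with hn
  have hn4 : 4 ≤ n := by omega
  have hΓsub := gamma_subset_R n
  have hθF := thetaF_mem_R n
  have hent := gamma_entails_theta n (by omega)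
  have hder : Derives X (GammaSet n id 0) (thetaF n) := hcomp _ _ hΓsub hθF hent
  have hbase : ∀ ψ ∈ GammaSet n id 0, InvP n ψ := by
    intro ψ hψ
    exact ⟨hΓsub hψ, EM_sat_gamma n ψ hψ, BM_sat_gamma n ψ hψ, TM_sat_gamma n ψ hψ,
      (gamma_ne_theta n hn4 ψ hψ).1, (gamma_ne_theta n hn4 ψ hψ).2⟩
  have hInv := derives_inv X hfin hIn hsound n hn hder hbase
  exact hInv.2.2.2.2.1 rfl

end Syllogistic
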